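/- arXiv:2106.14884 — 4 statements merged into one kernel-verified Lean document; each statement's English description precedes it below -/
import Mathlib

section
/- There exists an algebra automorphism σ of 𝒰_q^+ sending 𝒲_{−k} ↦ 𝒲_{k+1}, 𝒲_{k+1} ↦ 𝒲_{−k}, 𝒢_{k+1} ↦ 𝒢̃_{k+1}, 𝒢̃_{k+1} ↦ 𝒢_{k+1} for all k ∈ ℕ, with σ² = id; there exists an antiautomorphism † of 𝒰_q^+ (an algebra isomorphism onto the opposite algebra) fixing each 𝒲_{−k} and 𝒲_{k+1} and sending 𝒢_{k+1} ↦ 𝒢̃_{k+1}, 𝒢̃_{k+1} ↦ 𝒢_{k+1} for all k ∈ ℕ, with †² = id; moreover σ and † commute. -/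
noncomputable section

/-- The commutator `[X,Y] = XY - YX`. -/
def br {A : Type*} [Ring A] (X Y : A) : A := X * Y - Y * X

/-- The `q`-commutator `[X,Y]_q = q·XY - q⁻¹·YX`. -/
def qbr {F : Type*} [Field F] (q : F) {A : Type*} [Ring A] [Algebra F A] (X Y : A) : A :=
  q • (X * Y) - q⁻¹ • (Y * X)

/-- The element `E_δ = q⁻² W₁ W₀ - W₀ W₁`. -/
def Edel {F : Type*} [Field F] (q : F) {A : Type*} [Ring A] [Algebra F A] (W0 W1 : A) : A :=
  (q ^ 2)⁻¹ • (W1 * W0) - W0 * W1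

/-- The elements `E_{nδ+α₀}`. -/
def Em {F : Type*} [Field F] (q : F) {A : Type*} [Ring A] [Algebra F A] (W0 W1 : A) : ℕ → A
  | 0 => W0
  | n + 1 => (q + q⁻¹)⁻¹ • br (Edel q W0 W1) (Em q W0 W1 n)

/-- The elements `E_{nδ+α₁}`. -/
def Ep {F : Type*} [Field F] (q : F) {A : Type*} [Ring A] [Algebra F A] (W0 W1 : A) : ℕ → A
  | 0 => W1
  | n + 1 => (q + q⁻¹)⁻¹ • br (Ep q W0 W1 n) (Edel q W0 W1)

/-- The elements `E_{nδ}` (with `E_{0δ} = -(q-q⁻¹)⁻¹`). -/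
def Ed {F : Type*} [Field F] (q : F) {A : Type*} [Ring A] [Algebra F A] (W0 W1 : A) : ℕ → A
  | 0 => (-(q - q⁻¹)⁻¹) • (1 : A)
  | n + 1 => (q ^ 2)⁻¹ • (Ep q W0 W1 n * W0) - W0 * Ep q W0 W1 n

/-- The generating function with coefficients `a n`. -/
def ser {A : Type*} [Ring A] (a : ℕ → A) : PowerSeries A := PowerSeries.mk a

/-- The rescaled generating function `a(ct)`. -/
def serc {F : Type*} [Field F] {A : Type*} [Ring A] [Algebra F A] (c : F) (a : ℕ → A) :
    PowerSeries A := PowerSeries.mk fun n => c ^ n • a n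

/-- The generating function `a(s)` in the first variable `s`. -/
def serS {A : Type*} [Ring A] (a : ℕ → A) : PowerSeries (PowerSeries A) :=
  PowerSeries.C (R := PowerSeries A) (PowerSeries.mk a)

/-- The generating function `a(t)` in the second variable `t`. -/
def serT {A : Type*} [Ring A] (a : ℕ → A) : PowerSeries (PowerSeries A) :=
  PowerSeries.mk fun n => PowerSeries.C (R := A) (a n)

/-- The rescaled generating function `a(ct)` in the second variable `t`. -/
def serTc {F : Type*} [Field F] {A : Type*} [Ring A] [Algebra F A] (c : F) (a : ℕ → A) :
    PowerSeries (PowerSeries A) := PowerSeries.mk fun n => PowerSeries.C (R := A) (c ^ n • a n)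

/-- The variable `s` viewed in the two-variable power series ring. -/
def sVar (A : Type*) [Ring A] : PowerSeries (PowerSeries A) :=
  PowerSeries.C (R := PowerSeries A) PowerSeries.X

/-- The variable `t` viewed in the two-variable power series ring. -/
def tVar (A : Type*) [Ring A] : PowerSeries (PowerSeries A) := PowerSeries.X

/-- Generators of the alternating central extension: `wm k = 𝒲_{-k}`, `wp k = 𝒲_{k+1}`,
`g k = 𝒢_{k+1}`, `gt k = 𝒢̃_{k+1}`. -/
inductive AGen : Type
  | wm : ℕ → AGen
  | wp : ℕ → AGen
  | g : ℕ → AGen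
  | gt : ℕ → AGen

/-- `𝒲_{-k}` in the free algebra. -/
def fWm (F : Type*) [Field F] (k : ℕ) : FreeAlgebra F AGen := FreeAlgebra.ι F (AGen.wm k)

/-- `𝒲_{k+1}` in the free algebra. -/
def fWp (F : Type*) [Field F] (k : ℕ) : FreeAlgebra F AGen := FreeAlgebra.ι F (AGen.wp k)

/-- `𝒢_{k+1}` in the free algebra. -/
def fG (F : Type*) [Field F] (k : ℕ) : FreeAlgebra F AGen := FreeAlgebra.ι F (AGen.g k)

/-- `𝒢̃_{k+1}` in the free algebra. -/
def fGt (F : Type*) [Field F] (k : ℕ) : FreeAlgebra F AGen := FreeAlgebra.ι F (AGen.gt k)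

/-- The defining relations of the alternating central extension `𝒰_q^+`. -/
inductive URel (F : Type*) [Field F] (q : F) :
    FreeAlgebra F AGen → FreeAlgebra F AGen → Prop
  | r1 (k : ℕ) : URel F q (br (fWm F 0) (fWp F k)) ((1 - (q ^ 2)⁻¹) • (fGt F k - fG F k))
  | r2 (k : ℕ) : URel F q (br (fWm F k) (fWp F 0)) ((1 - (q ^ 2)⁻¹) • (fGt F k - fG F k))
  | r3 (k : ℕ) : URel F q (qbr q (fWm F 0) (fG F k)) ((q - q⁻¹) • fWm F (k + 1))
  | r4 (k : ℕ) : URel F q (qbr q (fGt F k) (fWm F 0)) ((q - q⁻¹) • fWm F (k + 1))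
  | r5 (k : ℕ) : URel F q (qbr q (fG F k) (fWp F 0)) ((q - q⁻¹) • fWp F (k + 1))
  | r6 (k : ℕ) : URel F q (qbr q (fWp F 0) (fGt F k)) ((q - q⁻¹) • fWp F (k + 1))
  | r7 (k l : ℕ) : URel F q (br (fWm F k) (fWm F l)) 0
  | r8 (k l : ℕ) : URel F q (br (fWp F k) (fWp F l)) 0
  | r9 (k l : ℕ) : URel F q (br (fWm F k) (fWp F l) + br (fWp F k) (fWm F l)) 0
  | r10 (k l : ℕ) : URel F q (br (fWm F k) (fG F l) + br (fG F k) (fWm F l)) 0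
  | r11 (k l : ℕ) : URel F q (br (fWm F k) (fGt F l) + br (fGt F k) (fWm F l)) 0
  | r12 (k l : ℕ) : URel F q (br (fWp F k) (fG F l) + br (fG F k) (fWp F l)) 0
  | r13 (k l : ℕ) : URel F q (br (fWp F k) (fGt F l) + br (fGt F k) (fWp F l)) 0
  | r14 (k l : ℕ) : URel F q (br (fG F k) (fG F l)) 0
  | r15 (k l : ℕ) : URel F q (br (fGt F k) (fGt F l)) 0
  | r16 (k l : ℕ) : URel F q (br (fGt F k) (fG F l) + br (fG F k) (fGt F l)) 0

/-- The alternating central extension `𝒰_q^+`, presented by the alternating generators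
and the relations `URel`. -/
def Ualt (F : Type*) [Field F] (q : F) : Type _ := RingQuot (URel F q)

instance (F : Type*) [Field F] (q : F) : Ring (Ualt F q) :=
  inferInstanceAs (Ring (RingQuot (URel F q)))

instance (F : Type*) [Field F] (q : F) : Algebra F (Ualt F q) :=
  inferInstanceAs (Algebra F (RingQuot (URel F q)))

/-- The generator `𝒲_{-k}` of `𝒰_q^+`. -/
def uWm (F : Type*) [Field F] (q : F) (k : ℕ) : Ualt F q :=
  RingQuot.mkAlgHom F (URel F q) (fWm F k)

/-- The generator `𝒲_{k+1}` of `𝒰_q^+`. -/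
def uWp (F : Type*) [Field F] (q : F) (k : ℕ) : Ualt F q :=
  RingQuot.mkAlgHom F (URel F q) (fWp F k)

/-- The elements `𝒢_k` of `𝒰_q^+` (with `𝒢₀ = 1`). -/
def uG (F : Type*) [Field F] (q : F) : ℕ → Ualt F q
  | 0 => 1
  | k + 1 => RingQuot.mkAlgHom F (URel F q) (fG F k)

/-- The elements `𝒢̃_k` of `𝒰_q^+` (with `𝒢̃₀ = 1`). -/
def uGt (F : Type*) [Field F] (q : F) : ℕ → Ualt F q
  | 0 => 1
  | k + 1 => RingQuot.mkAlgHom F (URel F q) (fGt F k)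

/-- The ordered product of a family of elements over a multiset of indices,
the indices being sorted in nondecreasing order. -/
def msProd {A : Type*} [Monoid A] (f : ℕ → A) (m : Multiset ℕ) : A :=
  ((m.sort (· ≤ ·)).map f).prod

/-!
Both maps are defined on generators and descend from the free algebra because they permute the
defining relations of `𝒰_q^+`: the swap `𝒲_{-k} ↔ 𝒲_{k+1}`, `𝒢 ↔ 𝒢̃` exchanges them in pairs
(using `[X,Y] = -[Y,X]` for the first two), and reversing products turns `[X,Y]` into `[Y,X]` and
`[X,Y]_q` into `[Y,X]_q`, so that together with `𝒢 ↔ 𝒢̃` it again exchanges the relations.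
Involutivity and the commutation of `σ` and `†` then only need to be checked on generators.
-/

open MulOpposite

section Brackets

variable {F : Type*} [Field F] (q : F) {A B : Type*} [Ring A] [Algebra F A] [Ring B] [Algebra F B]

theorem br_comm (X Y : A) : br X Y = -br Y X := by
  simp only [br, neg_sub]

theorem op_br (X Y : A) : br (op X) (op Y) = op (br Y X) := by
  simp only [br, op_sub, op_mul]

theorem op_qbr (X Y : A) : qbr q (op X) (op Y) = op (qbr q Y X) := by
  simp only [qbr, op_sub, op_smul, op_mul]

theorem map_br {G : Type*} [FunLike G A B] [RingHomClass G A B] (f : G) (X Y : A) :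
    f (br X Y) = br (f X) (f Y) := by
  simp only [br, map_sub, map_mul]

theorem map_qbr {G : Type*} [FunLike G A B] [AlgHomClass G F A B] (f : G) (X Y : A) :
    f (qbr q X Y) = qbr q (f X) (f Y) := by
  simp only [qbr, map_sub, map_smul, map_mul]

end Brackets

def AGen.elim {A : Type*} (wm wp g gt : ℕ → A) : AGen → A
  | .wm k => wm k
  | .wp k => wp k
  | .g k => g k
  | .gt k => gt k

/-- Families `wm k = 𝒲_{-k}`, `wp k = 𝒲_{k+1}`, `g k = 𝒢_{k+1}`, `gt k = 𝒢̃_{k+1}` in an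
algebra `A` satisfying the defining relations `URel` of `𝒰_q^+`. -/
structure UaltRels {F : Type*} [Field F] (q : F) {A : Type*} [Ring A] [Algebra F A]
    (wm wp g gt : ℕ → A) : Prop where
  r1 (k : ℕ) : br (wm 0) (wp k) = (1 - (q ^ 2)⁻¹) • (gt k - g k)
  r2 (k : ℕ) : br (wm k) (wp 0) = (1 - (q ^ 2)⁻¹) • (gt k - g k)
  r3 (k : ℕ) : qbr q (wm 0) (g k) = (q - q⁻¹) • wm (k + 1)
  r4 (k : ℕ) : qbr q (gt k) (wm 0) = (q - q⁻¹) • wm (k + 1)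
  r5 (k : ℕ) : qbr q (g k) (wp 0) = (q - q⁻¹) • wp (k + 1)
  r6 (k : ℕ) : qbr q (wp 0) (gt k) = (q - q⁻¹) • wp (k + 1)
  r7 (k l : ℕ) : br (wm k) (wm l) = 0
  r8 (k l : ℕ) : br (wp k) (wp l) = 0
  r9 (k l : ℕ) : br (wm k) (wp l) + br (wp k) (wm l) = 0
  r10 (k l : ℕ) : br (wm k) (g l) + br (g k) (wm l) = 0
  r11 (k l : ℕ) : br (wm k) (gt l) + br (gt k) (wm l) = 0
  r12 (k l : ℕ) : br (wp k) (g l) + br (g k) (wp l) = 0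
  r13 (k l : ℕ) : br (wp k) (gt l) + br (gt k) (wp l) = 0
  r14 (k l : ℕ) : br (g k) (g l) = 0
  r15 (k l : ℕ) : br (gt k) (gt l) = 0
  r16 (k l : ℕ) : br (gt k) (g l) + br (g k) (gt l) = 0

namespace UaltRels

variable {F : Type*} [Field F] {q : F} {A : Type*} [Ring A] [Algebra F A] {wm wp g gt : ℕ → A}

theorem swap (h : UaltRels q wm wp g gt) : UaltRels q wp wm gt g where
  r1 k := by rw [br_comm, h.r2, ← smul_neg, neg_sub]
  r2 k := by rw [br_comm, h.r1, ← smul_neg, neg_sub]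
  r3 := h.r6
  r4 := h.r5
  r5 := h.r4
  r6 := h.r3
  r7 := h.r8
  r8 := h.r7
  r9 k l := by rw [add_comm, h.r9]
  r10 := h.r13
  r11 := h.r12
  r12 := h.r11
  r13 := h.r10
  r14 := h.r15
  r15 := h.r14
  r16 k l := by rw [add_comm, h.r16]

theorem op (h : UaltRels q wm wp g gt) :
    UaltRels q (op ∘ wm) (op ∘ wp) (op ∘ gt) (op ∘ g) where
  r1 k := by
    simp only [Function.comp_apply, op_br]
    rw [br_comm, h.r1, ← smul_neg, neg_sub, op_smul, op_sub]
  r2 k := by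
    simp only [Function.comp_apply, op_br]
    rw [br_comm, h.r2, ← smul_neg, neg_sub, op_smul, op_sub]
  r3 k := by simp only [Function.comp_apply, op_qbr, h.r4, op_smul]
  r4 k := by simp only [Function.comp_apply, op_qbr, h.r3, op_smul]
  r5 k := by simp only [Function.comp_apply, op_qbr, h.r6, op_smul]
  r6 k := by simp only [Function.comp_apply, op_qbr, h.r5, op_smul]
  r7 k l := by simp only [Function.comp_apply, op_br, h.r7, op_zero]
  r8 k l := by simp only [Function.comp_apply, op_br, h.r8, op_zero]
  r9 k l := by simp only [Function.comp_apply, op_br, ← op_add, add_comm, h.r9, op_zero]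
  r10 k l := by simp only [Function.comp_apply, op_br, ← op_add, add_comm, h.r11, op_zero]
  r11 k l := by simp only [Function.comp_apply, op_br, ← op_add, add_comm, h.r10, op_zero]
  r12 k l := by simp only [Function.comp_apply, op_br, ← op_add, add_comm, h.r13, op_zero]
  r13 k l := by simp only [Function.comp_apply, op_br, ← op_add, add_comm, h.r12, op_zero]
  r14 k l := by simp only [Function.comp_apply, op_br, h.r15, op_zero]
  r15 k l := by simp only [Function.comp_apply, op_br, h.r14, op_zero]
  r16 k l := by simp only [Function.comp_apply, op_br, ← op_add, h.r16, op_zero]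

theorem of_respects (f : FreeAlgebra F AGen →ₐ[F] A) (hf : ∀ x y, URel F q x y → f x = f y) :
    UaltRels q (f ∘ fWm F) (f ∘ fWp F) (f ∘ fG F) (f ∘ fGt F) := by
  constructor <;> intros <;>
    simp only [Function.comp_apply, ← map_br, ← map_qbr, ← map_sub, ← map_smul, ← map_add] <;>
    first
    | exact hf _ _ (by constructor)
    | (rw [← map_zero f]; exact hf _ _ (by constructor))

theorem respects (h : UaltRels q wm wp g gt) (x y : FreeAlgebra F AGen) (hxy : URel F q x y) :
    FreeAlgebra.lift F (AGen.elim wm wp g gt) x = FreeAlgebra.lift F (AGen.elim wm wp g gt) y := by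
  cases hxy <;>
    simp only [map_br, map_qbr, map_add, map_sub, map_smul, map_zero, fWm, fWp, fG, fGt,
      FreeAlgebra.lift_ι_apply, AGen.elim]
  exacts [h.r1 _, h.r2 _, h.r3 _, h.r4 _, h.r5 _, h.r6 _, h.r7 _ _, h.r8 _ _, h.r9 _ _, h.r10 _ _,
    h.r11 _ _, h.r12 _ _, h.r13 _ _, h.r14 _ _, h.r15 _ _, h.r16 _ _]

end UaltRels

namespace Ualt

variable {F : Type*} [Field F] {q : F} {A : Type*} [Ring A] [Algebra F A]

theorem rels :
    UaltRels q (uWm F q) (uWp F q) (fun k => uG F q (k + 1)) (fun k => uGt F q (k + 1)) :=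
  UaltRels.of_respects _ fun _ _ => RingQuot.mkAlgHom_rel F

def lift {wm wp g gt : ℕ → A} (h : UaltRels q wm wp g gt) : Ualt F q →ₐ[F] A :=
  RingQuot.liftAlgHom F ⟨FreeAlgebra.lift F (AGen.elim wm wp g gt), h.respects⟩

section lift

variable {wm wp g gt : ℕ → A} (h : UaltRels q wm wp g gt) (k : ℕ)

theorem lift_mk (x : FreeAlgebra F AGen) :
    lift h (RingQuot.mkAlgHom F (URel F q) x) = FreeAlgebra.lift F (AGen.elim wm wp g gt) x :=
  RingQuot.liftAlgHom_mkAlgHom_apply _ _ _ _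

@[simp] theorem lift_uWm : lift h (uWm F q k) = wm k :=
  (lift_mk h _).trans (FreeAlgebra.lift_ι_apply _ _)

@[simp] theorem lift_uWp : lift h (uWp F q k) = wp k :=
  (lift_mk h _).trans (FreeAlgebra.lift_ι_apply _ _)

@[simp] theorem lift_uG : lift h (uG F q (k + 1)) = g k :=
  (lift_mk h _).trans (FreeAlgebra.lift_ι_apply _ _)

@[simp] theorem lift_uGt : lift h (uGt F q (k + 1)) = gt k :=
  (lift_mk h _).trans (FreeAlgebra.lift_ι_apply _ _)

end lift

@[ext]
theorem hom_ext {f f' : Ualt F q →ₐ[F] A} (hwm : ∀ k, f (uWm F q k) = f' (uWm F q k))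
    (hwp : ∀ k, f (uWp F q k) = f' (uWp F q k))
    (hg : ∀ k, f (uG F q (k + 1)) = f' (uG F q (k + 1)))
    (hgt : ∀ k, f (uGt F q (k + 1)) = f' (uGt F q (k + 1))) : f = f' := by
  apply RingQuot.ringQuot_ext'
  apply FreeAlgebra.hom_ext
  funext x
  cases x with
  | wm k => exact hwm k
  | wp k => exact hwp k
  | g k => exact hg k
  | gt k => exact hgt k

end Ualt

def AlgEquiv.ofInvolutiveToOp {R A : Type*} [CommSemiring R] [Semiring A] [Algebra R A]
    (f : A →ₐ[R] Aᵐᵒᵖ) (hf : (AlgHom.opComm f).comp f = AlgHom.id R A) : A ≃ₐ[R] Aᵐᵒᵖ :=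
  AlgEquiv.ofAlgHom f (AlgHom.opComm f)
    (AlgHom.ext fun x => unop_injective (AlgHom.congr_fun hf x.unop)) hf

namespace Ualt

variable {F : Type*} [Field F] (q : F)

def sigma : Ualt F q →ₐ[F] Ualt F q := lift rels.swap

def dagger : Ualt F q →ₐ[F] (Ualt F q)ᵐᵒᵖ := lift rels.op

section generators

variable (k : ℕ)

@[simp] theorem sigma_uWm : sigma q (uWm F q k) = uWp F q k := lift_uWm _ k
@[simp] theorem sigma_uWp : sigma q (uWp F q k) = uWm F q k := lift_uWp _ k
@[simp] theorem sigma_uG : sigma q (uG F q (k + 1)) = uGt F q (k + 1) := lift_uG _ k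
@[simp] theorem sigma_uGt : sigma q (uGt F q (k + 1)) = uG F q (k + 1) := lift_uGt _ k

@[simp] theorem dagger_uWm : dagger q (uWm F q k) = op (uWm F q k) := lift_uWm _ k
@[simp] theorem dagger_uWp : dagger q (uWp F q k) = op (uWp F q k) := lift_uWp _ k
@[simp] theorem dagger_uG : dagger q (uG F q (k + 1)) = op (uGt F q (k + 1)) := lift_uG _ k
@[simp] theorem dagger_uGt : dagger q (uGt F q (k + 1)) = op (uG F q (k + 1)) := lift_uGt _ k

end generators

theorem sigma_comp_sigma : (sigma q).comp (sigma q) = AlgHom.id F (Ualt F q) := by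
  ext <;> simp

theorem opComm_dagger_comp_dagger :
    (AlgHom.opComm (dagger q)).comp (dagger q) = AlgHom.id F (Ualt F q) := by
  ext <;> simp

theorem dagger_comp_sigma : (dagger q).comp (sigma q) = (AlgHom.op (sigma q)).comp (dagger q) := by
  ext <;> simp

def sigmaEquiv : Ualt F q ≃ₐ[F] Ualt F q :=
  AlgEquiv.ofAlgHom (sigma q) (sigma q) (sigma_comp_sigma q) (sigma_comp_sigma q)

def daggerEquiv : Ualt F q ≃ₐ[F] (Ualt F q)ᵐᵒᵖ :=
  AlgEquiv.ofInvolutiveToOp (dagger q) (opComm_dagger_comp_dagger q)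

end Ualt

theorem stmt5_general {F : Type*} [Field F] (q : F) :
    ∃ σ : Ualt F q ≃ₐ[F] Ualt F q, ∃ dag : Ualt F q ≃ₐ[F] (Ualt F q)ᵐᵒᵖ,
      (∀ k : ℕ, σ (uWm F q k) = uWp F q k) ∧
      (∀ k : ℕ, σ (uWp F q k) = uWm F q k) ∧
      (∀ k : ℕ, σ (uG F q (k + 1)) = uGt F q (k + 1)) ∧
      (∀ k : ℕ, σ (uGt F q (k + 1)) = uG F q (k + 1)) ∧
      (∀ x : Ualt F q, σ (σ x) = x) ∧
      (∀ k : ℕ, dag (uWm F q k) = MulOpposite.op (uWm F q k)) ∧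
      (∀ k : ℕ, dag (uWp F q k) = MulOpposite.op (uWp F q k)) ∧
      (∀ k : ℕ, dag (uG F q (k + 1)) = MulOpposite.op (uGt F q (k + 1))) ∧
      (∀ k : ℕ, dag (uGt F q (k + 1)) = MulOpposite.op (uG F q (k + 1))) ∧
      (∀ x : Ualt F q, (dag ((dag x).unop)).unop = x) ∧
      (∀ x : Ualt F q, (dag (σ x)).unop = σ ((dag x).unop)) :=
  ⟨Ualt.sigmaEquiv q, Ualt.daggerEquiv q,
    Ualt.sigma_uWm q, Ualt.sigma_uWp q, Ualt.sigma_uG q, Ualt.sigma_uGt q,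
    AlgHom.congr_fun (Ualt.sigma_comp_sigma q),
    Ualt.dagger_uWm q, Ualt.dagger_uWp q, Ualt.dagger_uG q, Ualt.dagger_uGt q,
    AlgHom.congr_fun (Ualt.opComm_dagger_comp_dagger q),
    fun x => congrArg unop (AlgHom.congr_fun (Ualt.dagger_comp_sigma q) x)⟩

/-- the automorphism `σ` and antiautomorphism `†` of `𝒰_q^+`, both
involutions, which commute. -/
theorem stmt5 {F : Type*} [Field F] (q : F) (hq0 : q ≠ 0)
    (hq : ∀ n : ℕ, 0 < n → q ^ n ≠ 1) :
    ∃ σ : Ualt F q ≃ₐ[F] Ualt F q, ∃ dag : Ualt F q ≃ₐ[F] (Ualt F q)ᵐᵒᵖ,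
      (∀ k : ℕ, σ (uWm F q k) = uWp F q k) ∧
      (∀ k : ℕ, σ (uWp F q k) = uWm F q k) ∧
      (∀ k : ℕ, σ (uG F q (k + 1)) = uGt F q (k + 1)) ∧
      (∀ k : ℕ, σ (uGt F q (k + 1)) = uG F q (k + 1)) ∧
      (∀ x : Ualt F q, σ (σ x) = x) ∧
      (∀ k : ℕ, dag (uWm F q k) = MulOpposite.op (uWm F q k)) ∧
      (∀ k : ℕ, dag (uWp F q k) = MulOpposite.op (uWp F q k)) ∧
      (∀ k : ℕ, dag (uG F q (k + 1)) = MulOpposite.op (uGt F q (k + 1))) ∧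
      (∀ k : ℕ, dag (uGt F q (k + 1)) = MulOpposite.op (uG F q (k + 1))) ∧
      (∀ x : Ualt F q, (dag ((dag x).unop)).unop = x) ∧
      (∀ x : Ualt F q, (dag (σ x)).unop = σ ((dag x).unop)) :=
  stmt5_general q
end
end

section
/- In the formal power series ring in two commuting variables s, t over 𝒰_q^+, the following six identities hold: (s−t)·𝒲⁺(s)𝒲⁻(t) = (s−t)·𝒲⁻(t)𝒲⁺(s) + (1−q⁻²)·(𝒢(s)𝒢̃(t) − 𝒢(t)𝒢̃(s)); (s−t)·𝒢̃(s)𝒢(t) = (s−t)·𝒢(t)𝒢̃(s) + (1−q²)·st·(𝒲⁻(t)𝒲⁺(s) − 𝒲⁻(s)𝒲⁺(t)); (s−t)·𝒲⁻(s)𝒢(t) = q⁻¹·((qs−q⁻¹t)·𝒢(t)𝒲⁻(s) − (q−q⁻¹)·t·𝒢(s)𝒲⁻(t)); (s−t)·𝒲⁺(s)𝒢(t) = q·((q⁻¹s−qt)·𝒢(t)𝒲⁺(s) + (q−q⁻¹)·t·𝒢(s)𝒲⁺(t)); (s−t)·𝒢̃(s)𝒲⁻(t) = q⁻¹·((q⁻¹s−qt)·𝒲⁻(t)𝒢̃(s)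 + (q−q⁻¹)·s·𝒲⁻(s)𝒢̃(t)); (s−t)·𝒢̃(s)𝒲⁺(t) = q·((qs−q⁻¹t)·𝒲⁺(t)𝒢̃(s) − (q−q⁻¹)·s·𝒲⁺(s)𝒢̃(t)). -/
noncomputable section

/-- Elements of an `F`-algebra satisfying the defining relations of the alternating
central extension `𝒰_q^+`.  Here `Wm k = 𝒲_{-k}`, `Wp k = 𝒲_{k+1}`, `G k = 𝒢_k`,
`Gt k = 𝒢̃_k` (with `𝒢₀ = 𝒢̃₀ = 1`). -/
structure AltData (F : Type*) [Field F] (q : F) (A : Type*) [Ring A] [Algebra F A] where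
  Wm : ℕ → A
  Wp : ℕ → A
  G : ℕ → A
  Gt : ℕ → A
  hG0 : G 0 = 1
  hGt0 : Gt 0 = 1
  rel1 : ∀ k : ℕ, br (Wm 0) (Wp k) = (1 - (q ^ 2)⁻¹) • (Gt (k + 1) - G (k + 1))
  rel2 : ∀ k : ℕ, br (Wm k) (Wp 0) = (1 - (q ^ 2)⁻¹) • (Gt (k + 1) - G (k + 1))
  rel3 : ∀ k : ℕ, qbr q (Wm 0) (G (k + 1)) = (q - q⁻¹) • Wm (k + 1)
  rel4 : ∀ k : ℕ, qbr q (Gt (k + 1)) (Wm 0) = (q - q⁻¹) • Wm (k + 1)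
  rel5 : ∀ k : ℕ, qbr q (G (k + 1)) (Wp 0) = (q - q⁻¹) • Wp (k + 1)
  rel6 : ∀ k : ℕ, qbr q (Wp 0) (Gt (k + 1)) = (q - q⁻¹) • Wp (k + 1)
  rel7 : ∀ k l : ℕ, br (Wm k) (Wm l) = 0
  rel8 : ∀ k l : ℕ, br (Wp k) (Wp l) = 0
  rel9 : ∀ k l : ℕ, br (Wm k) (Wp l) + br (Wp k) (Wm l) = 0
  rel10 : ∀ k l : ℕ, br (Wm k) (G (l + 1)) + br (G (k + 1)) (Wm l) = 0
  rel11 : ∀ k l : ℕ, br (Wm k) (Gt (l + 1)) + br (Gt (k + 1)) (Wm l) = 0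
  rel12 : ∀ k l : ℕ, br (Wp k) (G (l + 1)) + br (G (k + 1)) (Wp l) = 0
  rel13 : ∀ k l : ℕ, br (Wp k) (Gt (l + 1)) + br (Gt (k + 1)) (Wp l) = 0
  rel14 : ∀ k l : ℕ, br (G (k + 1)) (G (l + 1)) = 0
  rel15 : ∀ k l : ℕ, br (Gt (k + 1)) (Gt (l + 1)) = 0
  rel16 : ∀ k l : ℕ, br (Gt (k + 1)) (G (l + 1)) + br (G (k + 1)) (Gt (l + 1)) = 0

/-- The scalar `ξ = -q²(q-q⁻¹)⁻²`. -/
def xi {F : Type*} [Field F] (q : F) : F := -(q ^ 2) * ((q - q⁻¹)⁻¹) ^ 2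

/-- The central elements `𝒵ⁿ∨` (with `𝒵₀∨ = 1`). -/
def Zv {F : Type*} [Field F] (q : F) {A : Type*} [Ring A] [Algebra F A]
    (D : AltData F q A) (n : ℕ) : A :=
  (∑ k ∈ Finset.range (n + 1), (q ^ ((n : ℤ) - 2 * (k : ℤ))) • (D.G k * D.Gt (n - k))) -
    q • ∑ k ∈ Finset.range n, (q ^ ((n : ℤ) - 1 - 2 * (k : ℤ))) • (D.Wm k * D.Wp (n - 1 - k))

/-!
Read coefficientwise, the defining relations of `𝒰_q^+` become relations between generating
functions in the ring of power series in two central variables `s, t`. With `w = 𝒲₀` they are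
`[w, 𝒢(s)]_q = (q - q⁻¹) 𝒲⁻(s)` and its analogues, `s [w, 𝒲⁺(s)] = (1 - q⁻²)(𝒢̃(s) - 𝒢(s))`, and
symmetries such as `s [𝒲⁻(s), 𝒢(t)] = t [𝒲⁻(t), 𝒢(s)]`. The six identities follow from these by
noncommutative algebra alone. For the four mixed ones the point is that, when
`(q - q⁻¹) x = q w y - q⁻¹ y w` and `y, y'` commute, `(q - q⁻¹)(x y' - q⁻² y' x)` is symmetric
under `(x, y) ↔ (x', y')`. The first identity comes from substituting `𝒲⁻(t)` by its
`q`-commutator expression and moving `w` past `𝒲⁺(s)`. The second follows from the first and the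
fourth after writing `(1 - q⁻²)(𝒢̃(s) - 𝒢(s))` as `s [w, 𝒲⁺(s)]`.
-/

section Exchange

variable {F R : Type*} [Field F] [Ring R] [Algebra F R]

theorem qbr_one_right (p : F) (x : R) : qbr p x 1 = (p - p⁻¹) • x := by
  rw [qbr, mul_one, one_mul, sub_smul]

theorem qbr_one_left (p : F) (x : R) : qbr p 1 x = (p - p⁻¹) • x := by
  rw [qbr, mul_one, one_mul, sub_smul]

theorem br_swap_of_add_eq_zero {x y z w : R} (h : br x y + br z w = 0) : br x y = br w z := by
  rw [eq_neg_of_add_eq_zero_left h, br, br, neg_sub]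

theorem qbr_inv (p : F) (x y : R) : qbr p⁻¹ x y = -qbr p y x := by
  rw [qbr, qbr, inv_inv, neg_sub]

theorem qbr_inv_of_qbr {p : F} {w x y : R} (h : qbr p y w = (p - p⁻¹) • x) :
    qbr p⁻¹ w y = (p⁻¹ - p⁻¹⁻¹) • x := by
  rw [qbr_inv, h, inv_inv, ← neg_smul, neg_sub]

variable {p : F}

theorem qcomm_swap_of_qbr_left (hp0 : p ≠ 0) (hp : p ^ 2 ≠ 1) {w x x' y y' : R}
    (hx : qbr p w y = (p - p⁻¹) • x) (hx' : qbr p w y' = (p - p⁻¹) • x')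
    (hyy : Commute y y') :
    x * y' - (p ^ 2)⁻¹ • (y' * x) = x' * y - (p ^ 2)⁻¹ • (y * x') := by
  have hp1 : p ^ 2 - 1 ≠ 0 := sub_ne_zero.mpr hp
  linear_combination (norm := skip) (p - p⁻¹)⁻¹ • (-(hx * y') + (p ^ 2)⁻¹ • (y' * hx) + hx' * y
    - (p ^ 2)⁻¹ • (y * hx') + p • (w * hyy.eq) - (p ^ 3)⁻¹ • (hyy.eq * w))
  simp only [qbr, mul_sub, sub_mul, smul_sub, smul_mul_assoc, mul_smul_comm, smul_smul, mul_assoc,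
    smul_add]
  match_scalars <;> field_simp <;> ring

theorem qcomm_swap_of_qbr_right (hp0 : p ≠ 0) (hp : p ^ 2 ≠ 1) {w x x' y y' : R}
    (hx : qbr p y w = (p - p⁻¹) • x) (hx' : qbr p y' w = (p - p⁻¹) • x')
    (hyy : Commute y y') :
    y' * x - (p ^ 2)⁻¹ • (x * y') = y * x' - (p ^ 2)⁻¹ • (x' * y) := by
  have hp1 : p ^ 2 - 1 ≠ 0 := sub_ne_zero.mpr hp
  linear_combination (norm := skip) (p - p⁻¹)⁻¹ • (-(y' * hx) + (p ^ 2)⁻¹ • (hx * y') + y * hx'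
    - (p ^ 2)⁻¹ • (hx' * y) - p • (hyy.eq * w) + (p ^ 3)⁻¹ • (w * hyy.eq))
  simp only [qbr, mul_sub, sub_mul, smul_sub, smul_mul_assoc, mul_smul_comm, smul_smul, mul_assoc,
    smul_add]
  match_scalars <;> field_simp <;> ring

theorem exchange_of_qbr_left (hp0 : p ≠ 0) (hp : p ^ 2 ≠ 1) {s t w x x' y y' : R}
    (hx : qbr p w y = (p - p⁻¹) • x) (hx' : qbr p w y' = (p - p⁻¹) • x')
    (hyy : Commute y y') (hst : s * br x y' = t * br x' y) :
    (s - t) * (x * y') = p⁻¹ • ((p • s - p⁻¹ • t) * (y' * x) - (p - p⁻¹) • (t * (y * x'))) := by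
  linear_combination (norm := skip) hst - t * qcomm_swap_of_qbr_left hp0 hp hx hx' hyy
  simp only [br, mul_sub, sub_mul, smul_sub, smul_mul_assoc, mul_smul_comm, smul_smul]
  match_scalars <;> field_simp <;> ring

theorem exchange_of_qbr_right (hp0 : p ≠ 0) (hp : p ^ 2 ≠ 1) {s t w x x' y y' : R}
    (hx : qbr p y w = (p - p⁻¹) • x) (hx' : qbr p y' w = (p - p⁻¹) • x')
    (hyy : Commute y y') (hst : s * br x y' = t * br x' y) :
    (s - t) * (y * x') = p⁻¹ • ((p⁻¹ • s - p • t) * (x' * y) + (p - p⁻¹) • (s * (x * y'))) := by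
  linear_combination (norm := skip) -hst - s * qcomm_swap_of_qbr_right hp0 hp hx hx' hyy
  simp only [br, mul_sub, sub_mul, smul_sub, smul_mul_assoc, mul_smul_comm, smul_smul, smul_add]
  match_scalars <;> field_simp <;> ring

theorem exchange_of_qbr_left_inv (hp0 : p ≠ 0) (hp : p ^ 2 ≠ 1) {s t w x x' y y' : R}
    (hx : qbr p y w = (p - p⁻¹) • x) (hx' : qbr p y' w = (p - p⁻¹) • x')
    (hyy : Commute y y') (hst : s * br x y' = t * br x' y) :
    (s - t) * (x * y') = p • ((p⁻¹ • s - p • t) * (y' * x) + (p - p⁻¹) • (t * (y * x'))) := by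
  have hp' : (p⁻¹) ^ 2 ≠ 1 := by rwa [inv_pow, inv_ne_one]
  rw [exchange_of_qbr_left (inv_ne_zero hp0) hp' (qbr_inv_of_qbr hx) (qbr_inv_of_qbr hx') hyy hst,
    inv_inv, ← neg_sub p, neg_smul, sub_neg_eq_add]

theorem exchange_of_qbr_right_inv (hp0 : p ≠ 0) (hp : p ^ 2 ≠ 1) {s t w x x' y y' : R}
    (hx : qbr p w y = (p - p⁻¹) • x) (hx' : qbr p w y' = (p - p⁻¹) • x')
    (hyy : Commute y y') (hst : s * br x y' = t * br x' y) :
    (s - t) * (y * x') = p • ((p • s - p⁻¹ • t) * (x' * y) - (p - p⁻¹) • (s * (x * y'))) := by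
  have hp' : (p⁻¹) ^ 2 ≠ 1 := by rwa [inv_pow, inv_ne_one]
  rw [exchange_of_qbr_right (inv_ne_zero hp0) hp' (qbr_inv_of_qbr hx) (qbr_inv_of_qbr hx') hyy
    hst, inv_inv, ← neg_sub p, neg_smul, ← sub_eq_add_neg]

end Exchange

section CentralExchange

variable {F R : Type*} [Field F] [Ring R] [Algebra F R] {q : F}
  {s t w a a' b b' g g' h h' : R}

theorem br_exchange_of_qbr (hq0 : q ≠ 0) (hq : q ^ 2 ≠ 1)
    (hs : ∀ z, Commute s z) (ht : ∀ z, Commute t z)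
    (ha : qbr q w g = (q - q⁻¹) • a) (ha' : qbr q w g' = (q - q⁻¹) • a')
    (hb : s * br w b = (1 - (q ^ 2)⁻¹) • (h - g)) (hb' : t * br w b' = (1 - (q ^ 2)⁻¹) • (h' - g'))
    (hgg : Commute g g') (hab : br a b' = br a' b) (hbg : s * br b g' = t * br b' g)
    (hgh : br h g' = br h' g) :
    (s - t) * (b * a') = (s - t) * (a' * b) + (1 - (q ^ 2)⁻¹) • (g * h' - g' * h) := by
  have hq1 : q ^ 2 - 1 ≠ 0 := sub_ne_zero.mpr hq
  linear_combination (norm := skip) (q - q⁻¹)⁻¹ • (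
    ((1 - (q ^ 2)⁻¹) * (q + q⁻¹)) • hgg.eq - ((1 - (q ^ 2)⁻¹) * q) • hgh
    - q • (hb * g') + q⁻¹ • (g' * hb) + q • (hb' * g) - q⁻¹ • (g * hb')
    + q • (w * hbg) - q⁻¹ • (hbg * w)
    + t * b' * ha - t * ha * b' - s * b * ha' + s * ha' * b - (q - q⁻¹) • (t * hab))
  -- `s` and `t` are moved to the front in two passes: one pass with both rules would loop.
  simp only [br, qbr, mul_sub, sub_mul, smul_sub, smul_mul_assoc, mul_smul_comm, smul_smul,
    mul_assoc, smul_add, mul_add, fun y z => ((hs y).left_comm z).symm]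
  simp only [fun y z => ((ht y).left_comm z).symm]
  match_scalars <;> field_simp <;> ring

theorem br_exchange_of_exchange (hq0 : q ≠ 0) (hq : q ^ 2 ≠ 1)
    (hs : ∀ z, Commute s z) (ht : ∀ z, Commute t z)
    (ha : qbr q w g = (q - q⁻¹) • a) (ha' : qbr q w g' = (q - q⁻¹) • a')
    (hb : s * br w b = (1 - (q ^ 2)⁻¹) • (h - g)) (hb' : t * br w b' = (1 - (q ^ 2)⁻¹) • (h' - g'))
    (hgg : Commute g g')
    (hbg : (s - t) * (b * g') = q • ((q⁻¹ • s - q • t) * (g' * b) + (q - q⁻¹) • (t * (g * b'))))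
    (hba : (s - t) * (b * a') = (s - t) * (a' * b) + (1 - (q ^ 2)⁻¹) • (g * h' - g' * h)) :
    (s - t) * (h * g') = (s - t) * (g' * h) + (1 - q ^ 2) • (s * t * (a' * b - a * b')) := by
  have hq1 : q ^ 2 - 1 ≠ 0 := sub_ne_zero.mpr hq
  linear_combination (norm := skip) (1 - (q ^ 2)⁻¹)⁻¹ • (
    s * w * hbg - (q ^ 2)⁻¹ • (s * hbg * w) - (1 - (q ^ 2)⁻¹) • (s * hba)
    + q⁻¹ • (s * (s - q ^ 2 • t) * ha' * b) - q⁻¹ • (s * (s - t) * b * ha')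
    + (q - q⁻¹) • (s * t * ha * b')
    - (1 - (q ^ 2)⁻¹) • (s * g' * hb) + (1 - (q ^ 2)⁻¹) • (s * g * hb')
    - (1 - (q ^ 2)⁻¹) ^ 2 • (s * hgg.eq)
    - (s - t) * hb * g' + (s - t) * g' * hb + (1 - (q ^ 2)⁻¹) • ((s - t) * hgg.eq))
  simp only [br, qbr, mul_sub, sub_mul, smul_sub, smul_mul_assoc, mul_smul_comm, smul_smul,
    mul_assoc, smul_add, mul_add, add_mul, fun z => (hs z).eq.symm,
    fun y z => ((hs y).left_comm z).symm]
  simp only [fun y z => ((ht y).left_comm z).symm]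
  match_scalars <;> field_simp <;> ring

end CentralExchange

section GeneratingFunctions

open PowerSeries

variable {A : Type*} [Ring A]

theorem commute_sVar (f : PowerSeries (PowerSeries A)) : Commute (sVar A) f := by
  ext n : 1
  rw [sVar, coeff_C_mul, coeff_mul_C]
  exact (commute_X _).symm.eq

theorem commute_tVar (f : PowerSeries (PowerSeries A)) : Commute (tVar A) f :=
  (commute_X f).symm

theorem commute_serS_serT {u : ℕ → A} (h : ∀ m n, Commute (u m) (u n)) :
    Commute (serS u) (serT u) := by
  ext n m
  simpa [serS, serT, coeff_C_mul, coeff_mul_C] using (h m n).eq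

theorem br_serS_serT {u v : ℕ → A} (h : ∀ m n, br (u m) (v n) = br (u n) (v m)) :
    br (serS u) (serT v) = br (serT u) (serS v) := by
  ext n m
  simpa [br, serS, serT, coeff_C_mul, coeff_mul_C] using h m n

theorem sVar_mul_br_serS_serT {u v : ℕ → A}
    (h : ∀ m n, br (u m) (v (n + 1)) = br (u n) (v (m + 1)))
    (h0 : ∀ m, Commute (u m) (v 0)) :
    sVar A * br (serS u) (serT v) = tVar A * br (serT u) (serS v) := by
  simp only [br] at h ⊢
  ext n m
  rcases n with _ | n <;> rcases m with _ | m <;>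
    simp [serS, serT, sVar, tVar, coeff_C_mul, coeff_mul_C, coeff_succ_X_mul, (h0 _).eq, h]

variable {F : Type*} [Field F] [Algebra F A]

theorem qbr_C_serS {p r : F} {c : A} {u v : ℕ → A} (h : ∀ m, qbr p c (u m) = r • v m) :
    qbr p (C (C c)) (serS u) = r • serS v := by
  simp only [qbr] at h ⊢
  ext n m
  rcases n with _ | n <;> simp [serS, coeff_C_mul, coeff_mul_C, coeff_C, h]

theorem qbr_serS_C {p r : F} {c : A} {u v : ℕ → A} (h : ∀ m, qbr p (u m) c = r • v m) :
    qbr p (serS u) (C (C c)) = r • serS v := by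
  simp only [qbr] at h ⊢
  ext n m
  rcases n with _ | n <;> simp [serS, coeff_C_mul, coeff_mul_C, coeff_C, h]

theorem qbr_C_serT {p r : F} {c : A} {u v : ℕ → A} (h : ∀ m, qbr p c (u m) = r • v m) :
    qbr p (C (C c)) (serT u) = r • serT v := by
  simp only [qbr] at h ⊢
  ext n m
  rcases m with _ | m <;> simp [serT, coeff_C_mul, coeff_mul_C, coeff_C, h]

theorem qbr_serT_C {p r : F} {c : A} {u v : ℕ → A} (h : ∀ m, qbr p (u m) c = r • v m) :
    qbr p (serT u) (C (C c)) = r • serT v := by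
  simp only [qbr] at h ⊢
  ext n m
  rcases m with _ | m <;> simp [serT, coeff_C_mul, coeff_mul_C, coeff_C, h]

theorem sVar_mul_br_C_serS {r : F} {c : A} {u v v' : ℕ → A}
    (h : ∀ m, br c (u m) = r • (v (m + 1) - v' (m + 1))) (h0 : v 0 = v' 0) :
    sVar A * br (C (C c)) (serS u) = r • (serS v - serS v') := by
  simp only [br] at h ⊢
  ext n m
  rcases n with _ | n <;> rcases m with _ | m <;>
    simp [serS, sVar, coeff_C_mul, coeff_mul_C, coeff_succ_X_mul, h, h0]

theorem tVar_mul_br_C_serT {r : F} {c : A} {u v v' : ℕ → A}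
    (h : ∀ m, br c (u m) = r • (v (m + 1) - v' (m + 1))) (h0 : v 0 = v' 0) :
    tVar A * br (C (C c)) (serT u) = r • (serT v - serT v') := by
  simp only [br] at h ⊢
  ext n m
  rcases n with _ | n <;> rcases m with _ | m <;>
    simp [serT, tVar, coeff_C_mul, coeff_mul_C, coeff_succ_X_mul, h, h0]

end GeneratingFunctions

namespace AltData

open PowerSeries

variable {F : Type*} [Field F] {q : F} {A : Type*} [Ring A] [Algebra F A] (D : AltData F q A)

theorem qbr_Wm_zero_G : ∀ m, qbr q (D.Wm 0) (D.G m) = (q - q⁻¹) • D.Wm m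
  | 0 => by rw [D.hG0, qbr_one_right]
  | k + 1 => D.rel3 k

theorem qbr_Gt_Wm_zero : ∀ m, qbr q (D.Gt m) (D.Wm 0) = (q - q⁻¹) • D.Wm m
  | 0 => by rw [D.hGt0, qbr_one_left]
  | k + 1 => D.rel4 k

theorem qbr_G_Wp_zero : ∀ m, qbr q (D.G m) (D.Wp 0) = (q - q⁻¹) • D.Wp m
  | 0 => by rw [D.hG0, qbr_one_left]
  | k + 1 => D.rel5 k

theorem qbr_Wp_zero_Gt : ∀ m, qbr q (D.Wp 0) (D.Gt m) = (q - q⁻¹) • D.Wp m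
  | 0 => by rw [D.hGt0, qbr_one_right]
  | k + 1 => D.rel6 k

theorem commute_G : ∀ m n, Commute (D.G m) (D.G n)
  | 0, _ => D.hG0 ▸ Commute.one_left _
  | _, 0 => D.hG0 ▸ Commute.one_right _
  | k + 1, l + 1 => sub_eq_zero.mp (D.rel14 k l)

theorem commute_Gt : ∀ m n, Commute (D.Gt m) (D.Gt n)
  | 0, _ => D.hGt0 ▸ Commute.one_left _
  | _, 0 => D.hGt0 ▸ Commute.one_right _
  | k + 1, l + 1 => sub_eq_zero.mp (D.rel15 k l)

theorem br_Gt_G_swap : ∀ m n, br (D.Gt m) (D.G n) = br (D.Gt n) (D.G m)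
  | 0, _ | _, 0 => by simp [br, D.hG0, D.hGt0]
  | k + 1, l + 1 => br_swap_of_add_eq_zero (D.rel16 k l)

theorem qbr_Wm_zero_serS_G :
    qbr q (C (C (D.Wm 0))) (serS D.G) = (q - q⁻¹) • serS D.Wm :=
  qbr_C_serS D.qbr_Wm_zero_G

theorem qbr_Wm_zero_serT_G :
    qbr q (C (C (D.Wm 0))) (serT D.G) = (q - q⁻¹) • serT D.Wm :=
  qbr_C_serT D.qbr_Wm_zero_G

theorem sVar_mul_br_Wm_zero_serS_Wp :
    sVar A * br (C (C (D.Wm 0))) (serS D.Wp) = (1 - (q ^ 2)⁻¹) • (serS D.Gt - serS D.G) :=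
  sVar_mul_br_C_serS D.rel1 (D.hGt0.trans D.hG0.symm)

theorem tVar_mul_br_Wm_zero_serT_Wp :
    tVar A * br (C (C (D.Wm 0))) (serT D.Wp) = (1 - (q ^ 2)⁻¹) • (serT D.Gt - serT D.G) :=
  tVar_mul_br_C_serT D.rel1 (D.hGt0.trans D.hG0.symm)

theorem commute_serS_G_serT_G : Commute (serS D.G) (serT D.G) :=
  commute_serS_serT D.commute_G

theorem sVar_mul_br_serS_Wp_serT_G :
    sVar A * br (serS D.Wp) (serT D.G) = tVar A * br (serT D.Wp) (serS D.G) :=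
  sVar_mul_br_serS_serT (fun m n => br_swap_of_add_eq_zero (D.rel12 m n))
    fun _ => D.hG0 ▸ Commute.one_right _

variable {D}

theorem exchange_Wm_G (hq0 : q ≠ 0) (hq : q ^ 2 ≠ 1) :
    (sVar A - tVar A) * (serS D.Wm * serT D.G) =
      q⁻¹ • ((q • sVar A - q⁻¹ • tVar A) * (serT D.G * serS D.Wm) -
        (q - q⁻¹) • (tVar A * (serS D.G * serT D.Wm))) :=
  exchange_of_qbr_left hq0 hq D.qbr_Wm_zero_serS_G D.qbr_Wm_zero_serT_G D.commute_serS_G_serT_G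
    (sVar_mul_br_serS_serT (fun m n => br_swap_of_add_eq_zero (D.rel10 m n))
      fun _ => D.hG0 ▸ Commute.one_right _)

theorem exchange_Wp_G (hq0 : q ≠ 0) (hq : q ^ 2 ≠ 1) :
    (sVar A - tVar A) * (serS D.Wp * serT D.G) =
      q • ((q⁻¹ • sVar A - q • tVar A) * (serT D.G * serS D.Wp) +
        (q - q⁻¹) • (tVar A * (serS D.G * serT D.Wp))) :=
  exchange_of_qbr_left_inv hq0 hq (qbr_serS_C D.qbr_G_Wp_zero) (qbr_serT_C D.qbr_G_Wp_zero)
    D.commute_serS_G_serT_G D.sVar_mul_br_serS_Wp_serT_G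

theorem exchange_Gt_Wm (hq0 : q ≠ 0) (hq : q ^ 2 ≠ 1) :
    (sVar A - tVar A) * (serS D.Gt * serT D.Wm) =
      q⁻¹ • ((q⁻¹ • sVar A - q • tVar A) * (serT D.Wm * serS D.Gt) +
        (q - q⁻¹) • (sVar A * (serS D.Wm * serT D.Gt))) :=
  exchange_of_qbr_right hq0 hq (qbr_serS_C D.qbr_Gt_Wm_zero) (qbr_serT_C D.qbr_Gt_Wm_zero)
    (commute_serS_serT D.commute_Gt)
    (sVar_mul_br_serS_serT (fun m n => br_swap_of_add_eq_zero (D.rel11 m n))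
      fun _ => D.hGt0 ▸ Commute.one_right _)

theorem exchange_Gt_Wp (hq0 : q ≠ 0) (hq : q ^ 2 ≠ 1) :
    (sVar A - tVar A) * (serS D.Gt * serT D.Wp) =
      q • ((q • sVar A - q⁻¹ • tVar A) * (serT D.Wp * serS D.Gt) -
        (q - q⁻¹) • (sVar A * (serS D.Wp * serT D.Gt))) :=
  exchange_of_qbr_right_inv hq0 hq (qbr_C_serS D.qbr_Wp_zero_Gt) (qbr_C_serT D.qbr_Wp_zero_Gt)
    (commute_serS_serT D.commute_Gt)
    (sVar_mul_br_serS_serT (fun m n => br_swap_of_add_eq_zero (D.rel13 m n))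
      fun _ => D.hGt0 ▸ Commute.one_right _)

theorem exchange_Wp_Wm (hq0 : q ≠ 0) (hq : q ^ 2 ≠ 1) :
    (sVar A - tVar A) * (serS D.Wp * serT D.Wm) =
      (sVar A - tVar A) * (serT D.Wm * serS D.Wp) +
        (1 - (q ^ 2)⁻¹) • (serS D.G * serT D.Gt - serT D.G * serS D.Gt) :=
  br_exchange_of_qbr hq0 hq commute_sVar commute_tVar D.qbr_Wm_zero_serS_G D.qbr_Wm_zero_serT_G
    D.sVar_mul_br_Wm_zero_serS_Wp D.tVar_mul_br_Wm_zero_serT_Wp D.commute_serS_G_serT_G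
    (br_serS_serT fun m n => br_swap_of_add_eq_zero (D.rel9 m n))
    D.sVar_mul_br_serS_Wp_serT_G (br_serS_serT D.br_Gt_G_swap)

theorem exchange_Gt_G (hq0 : q ≠ 0) (hq : q ^ 2 ≠ 1) :
    (sVar A - tVar A) * (serS D.Gt * serT D.G) =
      (sVar A - tVar A) * (serT D.G * serS D.Gt) +
        (1 - q ^ 2) • (sVar A * tVar A * (serT D.Wm * serS D.Wp - serS D.Wm * serT D.Wp)) :=
  br_exchange_of_exchange hq0 hq commute_sVar commute_tVar D.qbr_Wm_zero_serS_G
    D.qbr_Wm_zero_serT_G D.sVar_mul_br_Wm_zero_serS_Wp D.tVar_mul_br_Wm_zero_serT_Wp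
    D.commute_serS_G_serT_G (exchange_Wp_G hq0 hq) (exchange_Wp_Wm hq0 hq)

end AltData

/-- six generating-function identities in the power series ring in two
commuting variables `s, t` over `𝒰_q^+`. -/
theorem stmt8 {F : Type*} [Field F] (q : F) (hq0 : q ≠ 0)
    (hq : ∀ n : ℕ, 0 < n → q ^ n ≠ 1)
    {A : Type*} [Ring A] [Algebra F A] (D : AltData F q A) :
    (sVar A - tVar A) * (serS D.Wp * serT D.Wm) =
        (sVar A - tVar A) * (serT D.Wm * serS D.Wp) +
          (1 - (q ^ 2)⁻¹) • (serS D.G * serT D.Gt - serT D.G * serS D.Gt) ∧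
    (sVar A - tVar A) * (serS D.Gt * serT D.G) =
        (sVar A - tVar A) * (serT D.G * serS D.Gt) +
          (1 - q ^ 2) • (sVar A * tVar A * (serT D.Wm * serS D.Wp - serS D.Wm * serT D.Wp)) ∧
    (sVar A - tVar A) * (serS D.Wm * serT D.G) =
        q⁻¹ • ((q • sVar A - q⁻¹ • tVar A) * (serT D.G * serS D.Wm) -
          (q - q⁻¹) • (tVar A * (serS D.G * serT D.Wm))) ∧
    (sVar A - tVar A) * (serS D.Wp * serT D.G) =
        q • ((q⁻¹ • sVar A - q • tVar A) * (serT D.G * serS D.Wp) +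
          (q - q⁻¹) • (tVar A * (serS D.G * serT D.Wp))) ∧
    (sVar A - tVar A) * (serS D.Gt * serT D.Wm) =
        q⁻¹ • ((q⁻¹ • sVar A - q • tVar A) * (serT D.Wm * serS D.Gt) +
          (q - q⁻¹) • (sVar A * (serS D.Wm * serT D.Gt))) ∧
    (sVar A - tVar A) * (serS D.Gt * serT D.Wp) =
        q • ((q • sVar A - q⁻¹ • tVar A) * (serT D.Wp * serS D.Gt) -
          (q - q⁻¹) • (sVar A * (serS D.Wp * serT D.Gt))) := by
  have hq2 : q ^ 2 ≠ 1 := hq 2 two_pos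
  exact ⟨AltData.exchange_Wp_Wm hq0 hq2, AltData.exchange_Gt_G hq0 hq2,
    AltData.exchange_Wm_G hq0 hq2, AltData.exchange_Wp_G hq0 hq2,
    AltData.exchange_Gt_Wm hq0 hq2, AltData.exchange_Gt_Wp hq0 hq2⟩

end
end

section
/- In the formal power series ring in t over 𝒰_q^+, the following identity holds: −(q−q⁻¹)·E(t) = (𝒢̃(q⁻¹ξ⁻¹t))⁻¹·𝒵^∨(ξ⁻¹t)·(𝒢̃(qξ⁻¹t))⁻¹, where ξ = −q²(q−q⁻¹)⁻². -/
noncomputable section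

/-!
Write `c₋ = q⁻¹ξ⁻¹`, `c₊ = qξ⁻¹` and `E⁺(t) = ∑ E_{nδ+α₁} tⁿ`. Since `E_δ` commutes with every
`𝒢̃ₖ` and `[𝒲_{k+1}, E_δ]` is a multiple of `𝒢̃_{k+1}𝒲₁ - 𝒲_{k+2}`, the recursion defining
`E_{nδ+α₁}` yields the factorisations `𝒢̃(c₋t) E⁺(t) = 𝒲⁺(c₋t)` and `E⁺(t) 𝒢̃(c₊t) = 𝒲⁺(c₊t)`;
the value of `ξ` is exactly what makes the constants match.

By definition `-(q-q⁻¹)E(t) = 1 - (q-q⁻¹) t (q⁻²E⁺(t)𝒲₀ - 𝒲₀E⁺(t))`. Multiply by `𝒢̃(c₋t)` on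
the left and `𝒢̃(c₊t)` on the right and use the factorisations; moving `𝒲₀` across `𝒢̃(c₋t)`
produces `𝒲⁻(c₋t)`, and `[𝒲₀, 𝒲_{k+1}] ∝ 𝒢̃_{k+1} - 𝒢_{k+1}` turns `t[𝒲⁺(c₋t), 𝒲₀]` into
`𝒢̃(c₋t) - 𝒢(c₋t)`. What remains is `𝒢(c₋t)𝒢̃(c₊t) - c₊t 𝒲⁻(c₋t)𝒲⁺(c₊t) = 𝒵^∨(ξ⁻¹t)`.
-/

section Scalars

variable {F : Type*} [Field F] {q : F}

lemma inv_mul_inv_xi (hq0 : q ≠ 0) : q⁻¹ * (xi q)⁻¹ = -((q - q⁻¹) ^ 2 / q ^ 3) := by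
  simp only [xi, mul_inv, inv_pow, inv_inv]
  field_simp

lemma mul_inv_xi (hq0 : q ≠ 0) : q * (xi q)⁻¹ = -((q - q⁻¹) ^ 2 / q) := by
  simp only [xi, mul_inv, inv_pow, inv_inv]
  field_simp

lemma sub_inv_ne_zero (hq0 : q ≠ 0) (hq2 : q ^ 2 ≠ 1) : q - q⁻¹ ≠ 0 := by
  rw [show q - q⁻¹ = (q ^ 2 - 1) / q by field_simp]
  exact div_ne_zero (sub_ne_zero.mpr hq2) hq0

lemma add_inv_ne_zero (hq0 : q ≠ 0) (hq4 : q ^ 4 ≠ 1) : q + q⁻¹ ≠ 0 := by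
  rw [show q + q⁻¹ = (q ^ 2 + 1) / q by field_simp]
  refine div_ne_zero (fun h => hq4 ?_) hq0
  linear_combination (q ^ 2 - 1) * h

lemma pow_mul_zpow_sub_two_mul (hq0 : q ≠ 0) (d : F) {k n : ℕ} (hk : k ≤ n) :
    d ^ n * q ^ ((n : ℤ) - 2 * k) = (q⁻¹ * d) ^ k * (q * d) ^ (n - k) := by
  obtain ⟨m, rfl⟩ := Nat.exists_eq_add_of_le hk
  rw [Nat.add_sub_cancel_left, show ((k + m : ℕ) : ℤ) - 2 * k = m - k by push_cast; ring,
    zpow_sub₀ hq0, zpow_natCast, zpow_natCast, mul_pow, mul_pow, inv_pow, pow_add]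
  field_simp

end Scalars

lemma br_eq_mulRight_sub_mulLeft {R : Type*} [CommRing R] {A : Type*} [Ring A] [Algebra R A]
    (X E : A) : br X E = (LinearMap.mulRight R E - LinearMap.mulLeft R E) X :=
  rfl

open Finset PowerSeries

lemma neg_smul_ser_Ed {F : Type*} [Field F] {q : F} {A : Type*} [Ring A] [Algebra F A]
    (hc : q - q⁻¹ ≠ 0) (W0 W1 : A) :
    (-(q - q⁻¹)) • ser (Ed q W0 W1) =
      1 - (q - q⁻¹) •
        (X * ((q ^ 2)⁻¹ • (ser (Ep q W0 W1) * C W0) - C W0 * ser (Ep q W0 W1))) := by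
  ext n
  cases n with
  | zero =>
    rw [coeff_smul, map_sub, coeff_smul, coeff_zero_X_mul, smul_zero, sub_zero, coeff_one,
      if_pos rfl, ser, coeff_mk, Ed, smul_smul, neg_mul_neg, mul_inv_cancel₀ hc, one_smul]
  | succ n =>
    rw [neg_smul, map_neg, map_sub, coeff_one, if_neg n.succ_ne_zero, zero_sub, coeff_smul,
      coeff_smul, coeff_succ_X_mul]
    simp only [ser, coeff_mk, Ed, map_sub, coeff_smul, coeff_mul_C, coeff_C_mul]

namespace AltData

variable {F : Type*} [Field F] {q : F} {A : Type*} [Ring A] [Algebra F A] (D : AltData F q A)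

lemma Wp_zero_mul_Gt (hq0 : q ≠ 0) (k : ℕ) :
    D.Wp 0 * D.Gt k = (q ^ 2)⁻¹ • (D.Gt k * D.Wp 0) + (q⁻¹ * (q - q⁻¹)) • D.Wp k := by
  cases k with
  | zero =>
    rw [D.hGt0, mul_one, one_mul]
    match_scalars
    field_simp
    ring
  | succ k =>
    have h := D.rel6 k
    rw [qbr] at h
    linear_combination (norm := match_scalars <;> field_simp <;> ring) q⁻¹ • h

lemma Gt_mul_Wm_zero (hq0 : q ≠ 0) (k : ℕ) :
    D.Gt k * D.Wm 0 = (q ^ 2)⁻¹ • (D.Wm 0 * D.Gt k) + (q⁻¹ * (q - q⁻¹)) • D.Wm k := by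
  cases k with
  | zero =>
    rw [D.hGt0, mul_one, one_mul]
    match_scalars
    field_simp
    ring
  | succ k =>
    have h := D.rel4 k
    rw [qbr] at h
    linear_combination (norm := match_scalars <;> field_simp <;> ring) q⁻¹ • h

lemma Wp_zero_mul_G (hq0 : q ≠ 0) (k : ℕ) :
    D.Wp 0 * D.G k = q ^ 2 • (D.G k * D.Wp 0) - (q * (q - q⁻¹)) • D.Wp k := by
  cases k with
  | zero =>
    rw [D.hG0, mul_one, one_mul]
    match_scalars
    field_simp
    ring
  | succ k =>
    have h := D.rel5 k
    rw [qbr] at h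
    linear_combination (norm := match_scalars <;> field_simp <;> ring) (-q) • h

lemma br_Wm_zero_Wp (hq0 : q ≠ 0) (k : ℕ) :
    br (D.Wm 0) (D.Wp k) = (q⁻¹ * (q - q⁻¹)) • (D.Gt (k + 1) - D.G (k + 1)) := by
  rw [D.rel1]
  congr 1
  field_simp

lemma commute_Edel_Gt (hq0 : q ≠ 0) (k : ℕ) :
    Commute (Edel q (D.Wm 0) (D.Wp 0)) (D.Gt k) := by
  have h1 := D.Wp_zero_mul_Gt hq0 k
  have h2 := D.Gt_mul_Wm_zero hq0 k
  have h3 := (D.rel1 k).trans (D.rel2 k).symm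
  rw [br, br] at h3
  rw [Commute, SemiconjBy, Edel]
  -- The two terms produced by moving `𝒲₀, 𝒲₁` across `𝒢̃ₖ` cancel because
  -- `[𝒲₀, 𝒲_{k+1}] = [𝒲_{-k}, 𝒲₁]`.
  linear_combination (norm := skip)
    h1 * D.Wm 0 - D.Wm 0 * h1 + h2 * D.Wp 0 - D.Wp 0 * h2 - (q⁻¹ * (q - q⁻¹)) • h3
  simp only [mul_sub, sub_mul, mul_add, add_mul, smul_mul_assoc, mul_smul_comm, mul_assoc]
  match_scalars <;> field_simp <;> ring

lemma br_Wp_Edel (hq0 : q ≠ 0) (k : ℕ) :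
    br (D.Wp k) (Edel q (D.Wm 0) (D.Wp 0)) =
      ((q + q⁻¹) * ((q - q⁻¹) ^ 2 / q ^ 3)) • (D.Gt (k + 1) * D.Wp 0 - D.Wp (k + 1)) := by
  have hWW := D.rel8 0 k
  have h0 := D.br_Wm_zero_Wp hq0 k
  have hGt := D.Wp_zero_mul_Gt hq0 (k + 1)
  have hG := D.Wp_zero_mul_G hq0 (k + 1)
  rw [br] at hWW h0 ⊢
  rw [Edel]
  -- `𝒲_{k+1}` commutes with `𝒲₁`, so only `[𝒲₀, 𝒲_{k+1}] ∝ 𝒢̃_{k+1} - 𝒢_{k+1}` contributes;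
  -- moving `𝒲₁` back across `𝒢̃_{k+1}` and `𝒢_{k+1}` then makes the `𝒢_{k+1}` terms cancel.
  linear_combination (norm := skip)
    (-(q ^ 2)⁻¹) • (hWW * D.Wm 0) + D.Wm 0 * hWW - (q ^ 2)⁻¹ • (D.Wp 0 * h0) + h0 * D.Wp 0 -
      ((q ^ 2)⁻¹ * (q⁻¹ * (q - q⁻¹))) • hGt + ((q ^ 2)⁻¹ * (q⁻¹ * (q - q⁻¹))) • hG
  simp only [mul_sub, sub_mul, add_mul, smul_mul_assoc, mul_smul_comm, mul_assoc, smul_sub,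
    smul_smul, zero_mul, mul_zero, smul_zero]
  match_scalars <;> field_simp <;> ring

lemma br_Wp_Edel' (hq0 : q ≠ 0) (k : ℕ) :
    br (D.Wp k) (Edel q (D.Wm 0) (D.Wp 0)) =
      ((q + q⁻¹) * ((q - q⁻¹) ^ 2 / q)) • (D.Wp 0 * D.Gt (k + 1) - D.Wp (k + 1)) := by
  linear_combination (norm := (simp only [smul_sub]; match_scalars <;> field_simp <;> ring))
    D.br_Wp_Edel hq0 k - ((q + q⁻¹) * ((q - q⁻¹) ^ 2 / q)) • D.Wp_zero_mul_Gt hq0 (k + 1)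

lemma Gt_mul_Ep_succ (hq0 : q ≠ 0) (i m : ℕ) :
    D.Gt i * Ep q (D.Wm 0) (D.Wp 0) (m + 1) =
      (q + q⁻¹)⁻¹ • br (D.Gt i * Ep q (D.Wm 0) (D.Wp 0) m) (Edel q (D.Wm 0) (D.Wp 0)) := by
  rw [Ep, mul_smul_comm, br, br, mul_sub, ← mul_assoc, ← mul_assoc, ← mul_assoc,
    (D.commute_Edel_Gt hq0 i).eq]

lemma Ep_succ_mul_Gt (hq0 : q ≠ 0) (i m : ℕ) :
    Ep q (D.Wm 0) (D.Wp 0) (m + 1) * D.Gt i =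
      (q + q⁻¹)⁻¹ • br (Ep q (D.Wm 0) (D.Wp 0) m * D.Gt i) (Edel q (D.Wm 0) (D.Wp 0)) := by
  rw [Ep, smul_mul_assoc, br, br, sub_mul, mul_assoc, mul_assoc, mul_assoc,
    (D.commute_Edel_Gt hq0 i).eq]

lemma sum_Gt_mul_Ep (hq0 : q ≠ 0) (hs : q + q⁻¹ ≠ 0) (n : ℕ) :
    ∑ i ∈ range (n + 1), (q⁻¹ * (xi q)⁻¹) ^ i • (D.Gt i * Ep q (D.Wm 0) (D.Wp 0) (n - i)) =
      (q⁻¹ * (xi q)⁻¹) ^ n • D.Wp n := by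
  set c := q⁻¹ * (xi q)⁻¹ with hc
  have hκ : (q + q⁻¹)⁻¹ * ((q + q⁻¹) * ((q - q⁻¹) ^ 2 / q ^ 3)) = -c := by
    rw [inv_mul_cancel_left₀ hs, hc, inv_mul_inv_xi hq0, neg_neg]
  induction n with
  | zero => simp [Ep, D.hGt0]
  | succ n ih =>
    calc ∑ i ∈ range (n + 2), c ^ i • (D.Gt i * Ep q (D.Wm 0) (D.Wp 0) (n + 1 - i))
        = (q + q⁻¹)⁻¹ •
            br (∑ i ∈ range (n + 1), c ^ i • (D.Gt i * Ep q (D.Wm 0) (D.Wp 0) (n - i)))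
              (Edel q (D.Wm 0) (D.Wp 0)) + c ^ (n + 1) • (D.Gt (n + 1) * D.Wp 0) := by
          rw [sum_range_succ, Nat.sub_self, Ep, br_eq_mulRight_sub_mulLeft (R := F), map_sum,
            smul_sum]
          congr 1
          refine sum_congr rfl fun i hi => ?_
          rw [Nat.sub_add_comm (Nat.le_of_lt_succ (mem_range.mp hi)), D.Gt_mul_Ep_succ hq0,
            map_smul, br_eq_mulRight_sub_mulLeft (R := F), smul_comm]
      _ = (q + q⁻¹)⁻¹ • br (c ^ n • D.Wp n) (Edel q (D.Wm 0) (D.Wp 0)) +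
            c ^ (n + 1) • (D.Gt (n + 1) * D.Wp 0) := by rw [ih]
      _ = c ^ (n + 1) • D.Wp (n + 1) := by
          rw [br_eq_mulRight_sub_mulLeft (R := F), map_smul, ← br_eq_mulRight_sub_mulLeft,
            D.br_Wp_Edel hq0, smul_smul, smul_smul, mul_right_comm, hκ]
          module

lemma sum_Ep_mul_Gt (hq0 : q ≠ 0) (hs : q + q⁻¹ ≠ 0) (n : ℕ) :
    ∑ i ∈ range (n + 1), (q * (xi q)⁻¹) ^ i • (Ep q (D.Wm 0) (D.Wp 0) (n - i) * D.Gt i) =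
      (q * (xi q)⁻¹) ^ n • D.Wp n := by
  set c := q * (xi q)⁻¹ with hc
  have hκ : (q + q⁻¹)⁻¹ * ((q + q⁻¹) * ((q - q⁻¹) ^ 2 / q)) = -c := by
    rw [inv_mul_cancel_left₀ hs, hc, mul_inv_xi hq0, neg_neg]
  induction n with
  | zero => simp [Ep, D.hGt0]
  | succ n ih =>
    calc ∑ i ∈ range (n + 2), c ^ i • (Ep q (D.Wm 0) (D.Wp 0) (n + 1 - i) * D.Gt i)
        = (q + q⁻¹)⁻¹ •
            br (∑ i ∈ range (n + 1), c ^ i • (Ep q (D.Wm 0) (D.Wp 0) (n - i) * D.Gt i))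
              (Edel q (D.Wm 0) (D.Wp 0)) + c ^ (n + 1) • (D.Wp 0 * D.Gt (n + 1)) := by
          rw [sum_range_succ, Nat.sub_self, Ep, br_eq_mulRight_sub_mulLeft (R := F), map_sum,
            smul_sum]
          congr 1
          refine sum_congr rfl fun i hi => ?_
          rw [Nat.sub_add_comm (Nat.le_of_lt_succ (mem_range.mp hi)), D.Ep_succ_mul_Gt hq0,
            map_smul, br_eq_mulRight_sub_mulLeft (R := F), smul_comm]
      _ = (q + q⁻¹)⁻¹ • br (c ^ n • D.Wp n) (Edel q (D.Wm 0) (D.Wp 0)) +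
            c ^ (n + 1) • (D.Wp 0 * D.Gt (n + 1)) := by rw [ih]
      _ = c ^ (n + 1) • D.Wp (n + 1) := by
          rw [br_eq_mulRight_sub_mulLeft (R := F), map_smul, ← br_eq_mulRight_sub_mulLeft,
            D.br_Wp_Edel' hq0, smul_smul, smul_smul, mul_right_comm, hκ]
          module

lemma serc_Gt_mul_ser_Ep (hq0 : q ≠ 0) (hs : q + q⁻¹ ≠ 0) :
    serc (q⁻¹ * (xi q)⁻¹) D.Gt * ser (Ep q (D.Wm 0) (D.Wp 0)) = serc (q⁻¹ * (xi q)⁻¹) D.Wp := by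
  ext n
  rw [coeff_mul, Nat.sum_antidiagonal_eq_sum_range_succ_mk]
  simp only [serc, ser, coeff_mk, smul_mul_assoc]
  exact D.sum_Gt_mul_Ep hq0 hs n

lemma ser_Ep_mul_serc_Gt (hq0 : q ≠ 0) (hs : q + q⁻¹ ≠ 0) :
    ser (Ep q (D.Wm 0) (D.Wp 0)) * serc (q * (xi q)⁻¹) D.Gt = serc (q * (xi q)⁻¹) D.Wp := by
  ext n
  rw [coeff_mul, ← Nat.sum_antidiagonal_swap, Nat.sum_antidiagonal_eq_sum_range_succ_mk]
  simp only [serc, ser, coeff_mk, Prod.fst_swap, Prod.snd_swap, mul_smul_comm]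
  exact D.sum_Ep_mul_Gt hq0 hs n

lemma serc_Gt_mul_C_Wm_zero (hq0 : q ≠ 0) (c : F) :
    serc c D.Gt * C (D.Wm 0) =
      (q ^ 2)⁻¹ • (C (D.Wm 0) * serc c D.Gt) + (q⁻¹ * (q - q⁻¹)) • serc c D.Wm := by
  ext n
  simp only [coeff_mul_C, coeff_C_mul, map_add, coeff_smul, serc, coeff_mk, smul_mul_assoc,
    mul_smul_comm, D.Gt_mul_Wm_zero hq0 n]
  module

lemma serc_Gt_sub_serc_G (hq0 : q ≠ 0) :
    serc (q⁻¹ * (xi q)⁻¹) D.Gt - serc (q⁻¹ * (xi q)⁻¹) D.G =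
      (q - q⁻¹) • (q ^ 2)⁻¹ • (X * br (serc (q⁻¹ * (xi q)⁻¹) D.Wp) (C (D.Wm 0))) := by
  set c := q⁻¹ * (xi q)⁻¹ with hc
  have hc' : c = -((q - q⁻¹) * (q ^ 2)⁻¹ * (q⁻¹ * (q - q⁻¹))) := by
    rw [hc, inv_mul_inv_xi hq0]
    field_simp
  ext n
  cases n with
  | zero => simp [serc, D.hGt0, D.hG0]
  | succ n =>
    simp only [br, map_sub, coeff_smul, coeff_succ_X_mul, coeff_mul_C, coeff_C_mul, serc,
      coeff_mk, smul_mul_assoc, mul_smul_comm, ← smul_sub]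
    rw [← br, show br (D.Wp n) (D.Wm 0) = -br (D.Wm 0) (D.Wp n) from (neg_sub _ _).symm,
      D.br_Wm_zero_Wp hq0, pow_succ, hc']
    module

lemma serc_Zv (hq0 : q ≠ 0) (d : F) :
    serc d (Zv q D) = serc (q⁻¹ * d) D.G * serc (q * d) D.Gt -
      (q * d) • (X * (serc (q⁻¹ * d) D.Wm * serc (q * d) D.Wp)) := by
  ext n
  cases n with
  | zero => simp [Zv, serc, D.hG0, D.hGt0]
  | succ m =>
    rw [map_sub, coeff_smul, coeff_succ_X_mul, coeff_mul, coeff_mul,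
      Nat.sum_antidiagonal_eq_sum_range_succ_mk, Nat.sum_antidiagonal_eq_sum_range_succ_mk]
    simp only [serc, Zv, coeff_mk, smul_sub, smul_sum, smul_smul, smul_mul_assoc, mul_smul_comm,
      Nat.add_sub_cancel]
    congr 1
    · refine sum_congr rfl fun k hk => ?_
      rw [pow_mul_zpow_sub_two_mul hq0 d (Nat.le_of_lt_succ (mem_range.mp hk)), mul_comm]
    · refine sum_congr rfl fun k hk => ?_
      rw [show ((m + 1 : ℕ) : ℤ) - 1 - 2 * k = m - 2 * k by push_cast; ring,
        show d ^ (m + 1) * (q * q ^ ((m : ℤ) - 2 * k)) = q * d * (d ^ m * q ^ ((m : ℤ) - 2 * k))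
          by ring, pow_mul_zpow_sub_two_mul hq0 d (Nat.le_of_lt_succ (mem_range.mp hk)),
        mul_comm ((q⁻¹ * d) ^ k)]

lemma serc_Gt_mul_twisted_br_mul_serc_Gt (hq0 : q ≠ 0) (hs : q + q⁻¹ ≠ 0) :
    serc (q⁻¹ * (xi q)⁻¹) D.Gt *
        ((q ^ 2)⁻¹ • (ser (Ep q (D.Wm 0) (D.Wp 0)) * C (D.Wm 0)) -
          C (D.Wm 0) * ser (Ep q (D.Wm 0) (D.Wp 0))) * serc (q * (xi q)⁻¹) D.Gt =
      (q ^ 2)⁻¹ • (br (serc (q⁻¹ * (xi q)⁻¹) D.Wp) (C (D.Wm 0)) * serc (q * (xi q)⁻¹) D.Gt) -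
        (q⁻¹ * (q - q⁻¹)) • (serc (q⁻¹ * (xi q)⁻¹) D.Wm * serc (q * (xi q)⁻¹) D.Wp) := by
  set L := serc (q⁻¹ * (xi q)⁻¹) D.Gt
  set R := serc (q * (xi q)⁻¹) D.Gt
  set E := ser (Ep q (D.Wm 0) (D.Wp 0))
  set x : PowerSeries A := C (D.Wm 0)
  calc L * ((q ^ 2)⁻¹ • (E * x) - x * E) * R
      = (q ^ 2)⁻¹ • (L * E * x * R) - L * x * E * R := by
        simp only [mul_sub, sub_mul, smul_mul_assoc, mul_smul_comm, mul_assoc]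
    _ = (q ^ 2)⁻¹ • (serc (q⁻¹ * (xi q)⁻¹) D.Wp * x * R) -
          ((q ^ 2)⁻¹ • (x * L) + (q⁻¹ * (q - q⁻¹)) • serc (q⁻¹ * (xi q)⁻¹) D.Wm) * E * R := by
        rw [D.serc_Gt_mul_ser_Ep hq0 hs, D.serc_Gt_mul_C_Wm_zero hq0]
    _ = (q ^ 2)⁻¹ • (serc (q⁻¹ * (xi q)⁻¹) D.Wp * x * R - x * (L * E) * R) -
          (q⁻¹ * (q - q⁻¹)) • (serc (q⁻¹ * (xi q)⁻¹) D.Wm * (E * R)) := by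
        simp only [add_mul, smul_mul_assoc, mul_assoc, smul_sub]
        abel
    _ = _ := by
        rw [D.serc_Gt_mul_ser_Ep hq0 hs, D.ser_Ep_mul_serc_Gt hq0 hs, br, sub_mul, mul_assoc x]

lemma serc_Gt_mul_smul_ser_Ed_mul_serc_Gt (hq0 : q ≠ 0) (hc : q - q⁻¹ ≠ 0)
    (hs : q + q⁻¹ ≠ 0) :
    serc (q⁻¹ * (xi q)⁻¹) D.Gt * ((-(q - q⁻¹)) • ser (Ed q (D.Wm 0) (D.Wp 0))) *
      serc (q * (xi q)⁻¹) D.Gt = serc (xi q)⁻¹ (Zv q D) := by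
  set L := serc (q⁻¹ * (xi q)⁻¹) D.Gt
  set R := serc (q * (xi q)⁻¹) D.Gt
  set W := serc (q⁻¹ * (xi q)⁻¹) D.Wm * serc (q * (xi q)⁻¹) D.Wp
  set Y := (q ^ 2)⁻¹ • (ser (Ep q (D.Wm 0) (D.Wp 0)) * C (D.Wm 0)) -
    C (D.Wm 0) * ser (Ep q (D.Wm 0) (D.Wp 0))
  calc L * ((-(q - q⁻¹)) • ser (Ed q (D.Wm 0) (D.Wp 0))) * R
      = L * R - (q - q⁻¹) • (X * (L * Y * R)) := by
        rw [neg_smul_ser_Ed hc, mul_sub, mul_one, mul_smul_comm, ← mul_assoc L X,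
          (commute_X L).eq, sub_mul, smul_mul_assoc, mul_assoc X L, mul_assoc X]
    _ = L * R - (q - q⁻¹) • (X * ((q ^ 2)⁻¹ •
          (br (serc (q⁻¹ * (xi q)⁻¹) D.Wp) (C (D.Wm 0)) * R) - (q⁻¹ * (q - q⁻¹)) • W)) := by
        rw [D.serc_Gt_mul_twisted_br_mul_serc_Gt hq0 hs]
    _ = L * R - (L - serc (q⁻¹ * (xi q)⁻¹) D.G) * R - (q * (xi q)⁻¹) • (X * W) := by
        rw [show L - serc (q⁻¹ * (xi q)⁻¹) D.G = _ from D.serc_Gt_sub_serc_G hq0,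
          mul_inv_xi hq0]
        simp only [mul_sub, mul_smul_comm, smul_sub, smul_mul_assoc, mul_assoc, smul_smul]
        module
    _ = serc (xi q)⁻¹ (Zv q D) := by
        rw [D.serc_Zv hq0]
        noncomm_ring

end AltData

/-- `-(q-q⁻¹)E(t) = (𝒢̃(q⁻¹ξ⁻¹t))⁻¹ 𝒵∨(ξ⁻¹t) (𝒢̃(qξ⁻¹t))⁻¹` in the power
series ring in `t` over `𝒰_q^+`, where `ξ = -q²(q-q⁻¹)⁻²` and the inverses are taken in
the group of units of the power series ring (the series `𝒢̃` has constant coefficient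
`1`, hence is invertible). -/
theorem stmt15 {F : Type*} [Field F] (q : F) (hq0 : q ≠ 0)
    (hq : ∀ n : ℕ, 0 < n → q ^ n ≠ 1)
    {A : Type*} [Ring A] [Algebra F A] (D : AltData F q A) :
    (∃ u : (PowerSeries A)ˣ, (u : PowerSeries A) = serc (q⁻¹ * (xi q)⁻¹) D.Gt) ∧
    (∃ u : (PowerSeries A)ˣ, (u : PowerSeries A) = serc (q * (xi q)⁻¹) D.Gt) ∧
    ∀ u1 u2 : (PowerSeries A)ˣ,
      (u1 : PowerSeries A) = serc (q⁻¹ * (xi q)⁻¹) D.Gt →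
      (u2 : PowerSeries A) = serc (q * (xi q)⁻¹) D.Gt →
      (-(q - q⁻¹)) • ser (Ed q (D.Wm 0) (D.Wp 0)) =
        ↑u1⁻¹ * serc ((xi q)⁻¹) (Zv q D) * ↑u2⁻¹ := by
  have hGt_unit (c : F) : IsUnit (serc c D.Gt) :=
    isUnit_iff_constantCoeff.mpr (by simp [serc, ← coeff_zero_eq_constantCoeff_apply, D.hGt0])
  refine ⟨hGt_unit _, hGt_unit _, fun u1 u2 h1 h2 => ?_⟩
  rw [← D.serc_Gt_mul_smul_ser_Ed_mul_serc_Gt hq0 (sub_inv_ne_zero hq0 (hq 2 two_pos))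
    (add_inv_ne_zero hq0 (hq 4 four_pos)), ← h1, ← h2]
  simp only [mul_assoc, Units.inv_mul_cancel_left, Units.mul_inv, mul_one]
end
end

section
/- In the formal power series ring in t over 𝒰_q^+, the following identity holds: 𝒢(t) = 𝒵^∨(qt)·(𝒢̃(q²t))⁻¹ + q²t·𝒲⁻(t)·𝒲⁺(q²t)·(𝒢̃(q²t))⁻¹. -/
noncomputable section

/-! Multiplied on the right by `𝒢̃(q²t)`, the identity reads
`𝒢(t)𝒢̃(q²t) = 𝒵^∨(qt) + q²t𝒲⁻(t)𝒲⁺(q²t)`, which is the definition of `𝒵^∨ₙ` read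
coefficientwise: rescaling by `qⁿ` turns its weights `q^(n-2k)` and `q·q^(n-1-2k)` into the
weight `(q²)^(n-k)` of the Cauchy products on the left and right. -/

lemma pow_mul_zpow_sub_two_mul_s19 {G₀ : Type*} [GroupWithZero G₀] {q : G₀} (hq : q ≠ 0)
    {n k : ℕ} (hk : k ≤ n) : q ^ n * q ^ ((n : ℤ) - 2 * k) = (q ^ 2) ^ (n - k) := by
  rw [← pow_mul, ← zpow_natCast, ← zpow_natCast, ← zpow_add₀ hq]
  congr 1
  push_cast [hk]
  ring

section GeneratingFunctions

variable {F : Type*} [Field F] {A : Type*} [Ring A] [Algebra F A]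

lemma coeff_serc (c : F) (a : ℕ → A) (n : ℕ) :
    PowerSeries.coeff n (serc c a) = c ^ n • a n :=
  PowerSeries.coeff_mk _ _

lemma constantCoeff_serc (c : F) (a : ℕ → A) :
    PowerSeries.constantCoeff (serc c a) = a 0 := by
  simp [← PowerSeries.coeff_zero_eq_constantCoeff_apply, coeff_serc]

lemma coeff_ser_mul_serc (c : F) (a b : ℕ → A) (n : ℕ) :
    PowerSeries.coeff n (ser a * serc c b) =
      ∑ k ∈ Finset.range (n + 1), c ^ (n - k) • (a k * b (n - k)) := by
  simp only [PowerSeries.coeff_mul, ser, serc, PowerSeries.coeff_mk, mul_smul_comm,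
    Finset.Nat.sum_antidiagonal_eq_sum_range_succ_mk]

lemma coeff_smul_X_mul_ser_mul_serc (c : F) (a b : ℕ → A) (n : ℕ) :
    PowerSeries.coeff n (c • (PowerSeries.X * ser a * serc c b)) =
      ∑ k ∈ Finset.range n, c ^ (n - k) • (a k * b (n - 1 - k)) := by
  cases n with
  | zero => simp
  | succ m =>
    rw [PowerSeries.coeff_smul, mul_assoc, PowerSeries.coeff_succ_X_mul, coeff_ser_mul_serc,
      Finset.smul_sum]
    refine Finset.sum_congr rfl fun k hk => ?_
    rw [smul_smul, ← pow_succ', Nat.sub_add_comm (Finset.mem_range_succ_iff.mp hk),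
      Nat.add_sub_cancel]

end GeneratingFunctions

lemma pow_smul_Zv {F : Type*} [Field F] {q : F} (hq : q ≠ 0) {A : Type*} [Ring A]
    [Algebra F A] (D : AltData F q A) (n : ℕ) :
    q ^ n • Zv q D n =
      ∑ k ∈ Finset.range (n + 1), (q ^ 2) ^ (n - k) • (D.G k * D.Gt (n - k)) -
        ∑ k ∈ Finset.range n, (q ^ 2) ^ (n - k) • (D.Wm k * D.Wp (n - 1 - k)) := by
  rw [Zv, smul_sub, smul_smul, Finset.smul_sum, Finset.smul_sum]
  congr 1 <;> refine Finset.sum_congr rfl fun k hk => ?_ <;> rw [smul_smul]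
  · rw [pow_mul_zpow_sub_two_mul_s19 hq (Finset.mem_range_succ_iff.mp hk)]
  · have hqk : q * q ^ ((n : ℤ) - 1 - 2 * k) = q ^ ((n : ℤ) - 2 * k) := by
      rw [← zpow_one_add₀ hq]
      ring_nf
    rw [mul_assoc, hqk, pow_mul_zpow_sub_two_mul_s19 hq (Finset.mem_range.mp hk).le]

lemma ser_G_mul_serc_Gt {F : Type*} [Field F] {q : F} (hq : q ≠ 0) {A : Type*} [Ring A]
    [Algebra F A] (D : AltData F q A) :
    ser D.G * serc (q ^ 2) D.Gt =
      serc q (Zv q D) + q ^ 2 • (PowerSeries.X * ser D.Wm * serc (q ^ 2) D.Wp) := by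
  ext n
  rw [map_add, coeff_ser_mul_serc, coeff_serc, pow_smul_Zv hq, coeff_smul_X_mul_ser_mul_serc,
    sub_add_cancel]

theorem stmt19_general {F : Type*} [Field F] (q : F) (hq0 : q ≠ 0)
    {A : Type*} [Ring A] [Algebra F A] (D : AltData F q A) :
    (∃ u : (PowerSeries A)ˣ, (u : PowerSeries A) = serc (q ^ 2) D.Gt) ∧
    ∀ u : (PowerSeries A)ˣ,
      (u : PowerSeries A) = serc (q ^ 2) D.Gt →
      ser D.G =
        serc q (Zv q D) * (↑u⁻¹ : PowerSeries A) +
          q ^ 2 • (PowerSeries.X * ser D.Wm * serc (q ^ 2) D.Wp * (↑u⁻¹ : PowerSeries A)) := by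
  refine ⟨PowerSeries.isUnit_iff_constantCoeff.mpr ?_, fun u hu => ?_⟩
  · rw [constantCoeff_serc, D.hGt0]
    exact isUnit_one
  · rw [← smul_mul_assoc, ← add_mul, Units.eq_mul_inv_iff_mul_eq, hu]
    exact ser_G_mul_serc_Gt hq0 D

/-- `𝒢(t) = 𝒵∨(qt)(𝒢̃(q²t))⁻¹ + q²t·𝒲⁻(t)𝒲⁺(q²t)(𝒢̃(q²t))⁻¹` in the
power series ring in `t` over `𝒰_q^+`, the inverse being taken in the group of units of
the power series ring (the series `𝒢̃` has constant coefficient `1`, hence is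
invertible). -/
theorem stmt19 {F : Type*} [Field F] (q : F) (hq0 : q ≠ 0)
    (hq : ∀ n : ℕ, 0 < n → q ^ n ≠ 1)
    {A : Type*} [Ring A] [Algebra F A] (D : AltData F q A) :
    (∃ u : (PowerSeries A)ˣ, (u : PowerSeries A) = serc (q ^ 2) D.Gt) ∧
    ∀ u : (PowerSeries A)ˣ,
      (u : PowerSeries A) = serc (q ^ 2) D.Gt →
      ser D.G =
        serc q (Zv q D) * (↑u⁻¹ : PowerSeries A) +
          q ^ 2 • (PowerSeries.X * ser D.Wm * serc (q ^ 2) D.Wp * (↑u⁻¹ : PowerSeries A)) :=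
  stmt19_general q hq0 D
end
end
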